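/- arXiv:2402.13252 — 6 statements merged into one kernel-verified Lean document; each statement's English description precedes it below -/
import Mathlib

section
/- Let f : ℝ → ℝ be continuous with compact support, let p₁, p₂, q₁, q₂ ∈ ℝ and set u = (p₁ − p₂) − (q₁ − q₂). For square-integrable g : ℝ → ℝ define L₁d(g) = ∑_{i∈{1,2}} ∫ (g(x) − f(x − p_i + q_i))² dx. Then g⋆(x) = (f(x − p₁ + q₁) + f(x − p₂ + q₂))/2 minimizes L₁d over all measurable g with g² integrable, and the minimum value is L₁d(g⋆) = (1/2) ∫ (f(x) − f(x + u))² dx; in particular the optimal value depends on p₁, p₂, q₁, q₂ only through the shift u. -/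
/-!
Pointwise, `(c - a)² + (c - b)² = ((a + b)/2 - a)² + ((a + b)/2 - b)² + 2 (c - (a + b)/2)²`,
so the midpoint of the two shifted copies `f₁, f₂` of `f` minimizes the loss, with minimum
`½ ∫ (f₁ - f₂)²`. Translating by the first shift turns this into `½ ∫ (f x - f (x + u))²`.
-/

open MeasureTheory

lemma sq_sub_midpoint_add_sq_sub_midpoint_le (a b c : ℝ) :
    ((a + b) / 2 - a) ^ 2 + ((a + b) / 2 - b) ^ 2 ≤ (c - a) ^ 2 + (c - b) ^ 2 := by
  nlinarith [sq_nonneg (2 * c - a - b)]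

section Midpoint

variable {α : Type*} [MeasurableSpace α] {μ : Measure α} {a b : α → ℝ}

lemma integral_sq_sub_midpoint_add_integral_sq_sub_midpoint :
    ∫ x, ((a x + b x) / 2 - a x) ^ 2 ∂μ + ∫ x, ((a x + b x) / 2 - b x) ^ 2 ∂μ
      = (1 / 2) * ∫ x, (a x - b x) ^ 2 ∂μ := by
  have hquarter : ∀ x y : ℝ, ((x + y) / 2 - x) ^ 2 = (1 / 4) * (x - y) ^ 2 ∧
      ((x + y) / 2 - y) ^ 2 = (1 / 4) * (x - y) ^ 2 :=
    fun x y => ⟨by ring, by ring⟩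
  simp only [hquarter, integral_const_mul]
  ring

lemma integral_sq_sub_midpoint_add_integral_sq_sub_midpoint_le {g : α → ℝ}
    (ha : MemLp a 2 μ) (hb : MemLp b 2 μ) (hg : MemLp g 2 μ) :
    ∫ x, ((a x + b x) / 2 - a x) ^ 2 ∂μ + ∫ x, ((a x + b x) / 2 - b x) ^ 2 ∂μ
      ≤ ∫ x, (g x - a x) ^ 2 ∂μ + ∫ x, (g x - b x) ^ 2 ∂μ := by
  have hsq : ∀ {c d : α → ℝ}, MemLp c 2 μ → MemLp d 2 μ →
      Integrable (fun x => (c x - d x) ^ 2) μ := fun hc hd => (hc.sub hd).integrable_sq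
  have hm : MemLp (fun x => (a x + b x) / 2) 2 μ := by
    simpa only [div_eq_inv_mul, Pi.add_apply] using (ha.add hb).const_mul 2⁻¹
  rw [← integral_add (hsq hm ha) (hsq hm hb), ← integral_add (hsq hg ha) (hsq hg hb)]
  exact integral_mono ((hsq hm ha).add (hsq hm hb)) ((hsq hg ha).add (hsq hg hb))
    fun x => sq_sub_midpoint_add_sq_sub_midpoint_le (a x) (b x) (g x)

end Midpoint

lemma integral_comp_add_right_add_right {G E : Type*} [MeasurableSpace G] [AddCommGroup G]
    [MeasurableAdd G] [NormedAddCommGroup E] [NormedSpace ℝ E] (μ : Measure G)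
    [μ.IsAddRightInvariant] (F : G → G → E) (s t : G) :
    ∫ x, F (x + s) (x + t) ∂μ = ∫ x, F x (x + (t - s)) ∂μ := by
  rw [← integral_add_right_eq_self (fun x => F x (x + (t - s))) s]
  simp only [add_add_sub_cancel]

lemma HasCompactSupport.comp_sub_add {f : ℝ → ℝ} (hf : HasCompactSupport f) (p q : ℝ) :
    HasCompactSupport fun x => f (x - p + q) :=
  hf.comp_homeomorph ((Homeomorph.subRight p).trans (Homeomorph.addRight q))

theorem stmt_1 (f : ℝ → ℝ) (hf : Continuous f) (hsupp : HasCompactSupport f)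
    (p₁ p₂ q₁ q₂ u : ℝ) (hu : u = (p₁ - p₂) - (q₁ - q₂)) :
    (∀ g : ℝ → ℝ, Measurable g → Integrable (fun x => (g x) ^ 2) →
      (∫ x, ((f (x - p₁ + q₁) + f (x - p₂ + q₂)) / 2 - f (x - p₁ + q₁)) ^ 2) +
        (∫ x, ((f (x - p₁ + q₁) + f (x - p₂ + q₂)) / 2 - f (x - p₂ + q₂)) ^ 2)
        ≤ (∫ x, (g x - f (x - p₁ + q₁)) ^ 2) + (∫ x, (g x - f (x - p₂ + q₂)) ^ 2)) ∧
    (∫ x, ((f (x - p₁ + q₁) + f (x - p₂ + q₂)) / 2 - f (x - p₁ + q₁)) ^ 2) +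
      (∫ x, ((f (x - p₁ + q₁) + f (x - p₂ + q₂)) / 2 - f (x - p₂ + q₂)) ^ 2)
      = (1 / 2) * ∫ x, (f x - f (x + u)) ^ 2 := by
  have hshift : ∀ p q : ℝ, MemLp (fun x => f (x - p + q)) 2 volume := fun p q =>
    (hf.comp (by fun_prop)).memLp_of_hasCompactSupport (hsupp.comp_sub_add p q)
  refine ⟨fun g hg hg2 => integral_sq_sub_midpoint_add_integral_sq_sub_midpoint_le
    (hshift p₁ q₁) (hshift p₂ q₂) ((memLp_two_iff_integrable_sq hg.aestronglyMeasurable).2 hg2), ?_⟩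
  have hsub_add : ∀ x p q : ℝ, x - p + q = x + (q - p) := fun x p q => by ring
  have hu' : q₂ - p₂ - (q₁ - p₁) = u := by rw [hu]; ring
  rw [integral_sq_sub_midpoint_add_integral_sq_sub_midpoint]
  simp only [hsub_add]
  rw [integral_comp_add_right_add_right volume (fun a b => (f a - f b) ^ 2), hu']
end

section
/- Let f : ℝ → ℝ be a real-valued Schwartz function and define L₁d(u) = ∫ (f(x) − f(x + u))² dx. Then L₁d is differentiable at every u ∈ ℝ, and its derivative is (d/du) L₁d(u) = ∫ ‖𝓕f(k)‖² · H(u, k) dk, where H(u, k) = 4πk·sin(2πku) and 𝓕f(k) = ∫ f(x)·exp(−2πi k x) dx is the Fourier transform of f. -/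
open MeasureTheory Real
open scoped FourierTransform RealInnerProductSpace

namespace Stmt4Aux

/-- The inclusion of a real Schwartz function into complex-valued Schwartz functions. -/
noncomputable def toC (g : SchwartzMap ℝ ℝ) : SchwartzMap ℝ ℂ :=
  SchwartzMap.bilinLeftCLM (ContinuousLinearMap.lsmul ℝ ℝ : ℝ →L[ℝ] ℂ →L[ℝ] ℂ)
    (Function.HasTemperateGrowth.const (1 : ℂ)) g

lemma toC_apply (g : SchwartzMap ℝ ℝ) (x : ℝ) : toC g x = (g x : ℂ) := by
  show (g x : ℝ) • (1 : ℂ) = _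
  simp [Complex.real_smul]

lemma toC_coe (g : SchwartzMap ℝ ℝ) : ⇑(toC g) = fun x => (g x : ℂ) := funext (toC_apply g)

lemma integral_ofReal'' (f : ℝ → ℝ) :
    ∫ x, ((f x : ℝ) : ℂ) = ((∫ x, f x : ℝ) : ℂ) := by
  simpa using Complex.ofRealLI.integral_comp_comm f

lemma integrable_conj' {g : ℝ → ℂ} (h : Integrable g) :
    Integrable (fun k => (starRingEnd ℂ) (g k)) := by
  refine h.norm.mono' (Complex.continuous_conj.comp_aestronglyMeasurable h.1) ?_
  filter_upwards with x
  simp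

lemma innerl_flip : (innerₗ ℝ).flip = innerₗ ℝ := by
  ext
  simp [real_inner_comm]

lemma mult_formula {a b : ℝ → ℂ} (ha : Integrable a) (hb : Integrable b) :
    ∫ k, (𝓕 a k) * b k = ∫ x, a x * 𝓕 b x := by
  have h := VectorFourier.integral_fourierIntegral_smul_eq_flip (F := ℂ)
    (L := innerₗ ℝ) Real.continuous_fourierChar
    (by simpa [RCLike.inner_apply] using (by fun_prop : Continuous fun p : ℝ × ℝ => p.2 * p.1))
    ha hb
  rw [innerl_flip] at h
  simp only [smul_eq_mul] at h
  exact h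

lemma fourierChar_conj (θ : ℝ) : ((𝐞 (-θ)) : ℂ) = (starRingEnd ℂ) ((𝐞 θ) : ℂ) := by
  simp only [Real.fourierChar_apply, ← Complex.exp_conj, map_mul, Complex.conj_I,
    Complex.conj_ofReal, mul_neg, Complex.ofReal_neg, neg_mul]

lemma fourier_conj (w : ℝ → ℂ) (x : ℝ) :
    𝓕 (fun k => (starRingEnd ℂ) (w k)) x = (starRingEnd ℂ) (𝓕⁻ w x) := by
  rw [Real.fourier_eq, Real.fourierInv_eq, ← integral_conj]
  congr 1; ext k
  simp [Circle.smul_def, fourierChar_conj, -Circle.starRingEnd_addChar]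

lemma parseval {h : ℝ → ℂ} (hc : Continuous h) (hi : Integrable h) (hFi : Integrable (𝓕 h)) :
    ∫ x, ‖h x‖ ^ 2 = ∫ k, ‖𝓕 h k‖ ^ 2 := by
  have key : ∫ k, 𝓕 h k * (starRingEnd ℂ) (𝓕 h k) = ∫ x, h x * (starRingEnd ℂ) (h x) := by
    have h1 := mult_formula hi (integrable_conj' hFi)
    rw [h1]
    congr 1; ext x
    rw [fourier_conj, hi.fourierInv_fourier_eq hFi hc.continuousAt]
  have e1 : ∀ z : ℂ, z * (starRingEnd ℂ) z = ((‖z‖ ^ 2 : ℝ) : ℂ) := by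
    intro z
    rw [Complex.mul_conj, Complex.normSq_eq_norm_sq]
  simp only [e1] at key
  have A := integral_ofReal'' fun x => ‖h x‖ ^ 2
  have B := integral_ofReal'' fun k => ‖𝓕 h k‖ ^ 2
  rw [A, B] at key
  exact Complex.ofReal_inj.mp key.symm

lemma fourierIntegral_sub' {a b : ℝ → ℂ} (ha : Integrable a) (hb : Integrable b) (k : ℝ) :
    𝓕 (fun x => a x - b x) k = 𝓕 a k - 𝓕 b k := by
  simp only [Real.fourier_eq, smul_sub]
  exact integral_sub ((Real.fourierIntegral_convergent_iff k).2 ha)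
    ((Real.fourierIntegral_convergent_iff k).2 hb)

lemma fourier_translate (g : ℝ → ℂ) (v k : ℝ) :
    𝓕 (fun x => g (x + v)) k = ((𝐞 (v * k) : Circle) : ℂ) * 𝓕 g k := by
  have h := congrFun (VectorFourier.fourierIntegral_comp_add_right 𝐞
    (volume : Measure ℝ) (innerₗ ℝ) g v) k
  rw [mul_comm v k]
  simp [Function.comp_def, RCLike.inner_apply, Circle.smul_def] at h
  exact h

lemma norm_one_sub_exp (θ : ℝ) :
    ‖(1 : ℂ) - Complex.exp ((θ : ℂ) * Complex.I)‖ ^ 2 = 2 - 2 * Real.cos θ := by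
  rw [Complex.sq_norm, Complex.normSq_apply]
  simp only [Complex.sub_re, Complex.one_re, Complex.exp_ofReal_mul_I_re, Complex.sub_im,
    Complex.one_im, Complex.exp_ofReal_mul_I_im]
  nlinarith [Real.sin_sq_add_cos_sq θ]

lemma stepA (f : SchwartzMap ℝ ℝ) (v : ℝ) :
    ∫ x, (f x - f (x + v)) ^ 2 =
      ∫ k, ‖𝓕 (fun x => (f x : ℂ)) k‖ ^ 2 * (2 - 2 * Real.cos (2 * π * k * v)) := by
  set g : ℝ → ℂ := fun x => (f x : ℂ) with hg
  have hgc : ⇑(toC f) = g := toC_coe f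
  have hgint : Integrable g := by rw [← hgc]; exact (toC f).integrable (μ := volume)
  have hgcont : Continuous g := by rw [← hgc]; exact (toC f).continuous
  have htint : Integrable (fun x => g (x + v)) := hgint.comp_add_right v
  have hFg_int : Integrable (𝓕 g) := by
    have := (SchwartzMap.fourierTransformCLM ℂ (toC f)).integrable (μ := volume)
    rwa [SchwartzMap.fourierTransformCLM_apply, SchwartzMap.fourier_coe, hgc] at this
  have hFg_cont : Continuous (𝓕 g) := by
    have := (SchwartzMap.fourierTransformCLM ℂ (toC f)).continuous
    rwa [SchwartzMap.fourierTransformCLM_apply, SchwartzMap.fourier_coe, hgc] at this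
  set h : ℝ → ℂ := fun x => g x - g (x + v) with hh
  have hFT : ∀ k, 𝓕 h k = (1 - ((𝐞 (v * k) : Circle) : ℂ)) * 𝓕 g k := by
    intro k
    rw [hh, fourierIntegral_sub' hgint htint, fourier_translate g v k]
    ring
  have hFh_int : Integrable (𝓕 h) := by
    have heq : 𝓕 h = fun k => (1 - ((𝐞 (v * k) : Circle) : ℂ)) * 𝓕 g k := funext hFT
    rw [heq]
    refine (hFg_int.norm.const_mul 2).mono' ?_ ?_
    · exact (Continuous.mul (by continuity) hFg_cont).aestronglyMeasurable
    · filter_upwards with k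
      rw [norm_mul]
      have h1 : ‖(1 : ℂ) - ((𝐞 (v * k) : Circle) : ℂ)‖ ≤ 2 := by
        calc ‖(1 : ℂ) - ((𝐞 (v * k) : Circle) : ℂ)‖
            ≤ ‖(1 : ℂ)‖ + ‖((𝐞 (v * k) : Circle) : ℂ)‖ := norm_sub_le _ _
          _ = 2 := by rw [norm_one, Circle.norm_coe]; norm_num
      exact mul_le_mul_of_nonneg_right h1 (norm_nonneg _)
  have hhc : Continuous h := hgcont.sub (hgcont.comp (continuous_id.add continuous_const))
  have lhs : ∫ x, (f x - f (x + v)) ^ 2 = ∫ x, ‖h x‖ ^ 2 := by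
    congr 1; ext x
    have : h x = ((f x - f (x + v) : ℝ) : ℂ) := by push_cast [hh, hg]; ring
    rw [this, Complex.norm_real, Real.norm_eq_abs, sq_abs]
  rw [lhs, parseval hhc (hgint.sub htint) hFh_int]
  congr 1; ext k
  rw [hFT k, norm_mul, mul_pow, Real.fourierChar_apply]
  rw [norm_one_sub_exp (2 * π * (v * k))]
  rw [show Real.cos (2 * π * (v * k)) = Real.cos (2 * π * k * v) by ring_nf]
  ring

lemma stepB (G : SchwartzMap ℝ ℂ) (u : ℝ) :
    HasDerivAt (fun t : ℝ => ∫ k, ‖G k‖ ^ 2 * (2 - 2 * Real.cos (2 * π * k * t)))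
      (∫ k, ‖G k‖ ^ 2 * (4 * π * k * Real.sin (2 * π * k * u))) u := by
  set C := ‖G.toBoundedContinuousFunction‖ with hCdef
  have hC : ∀ k, ‖G k‖ ≤ C := fun k => by
    simpa using G.toBoundedContinuousFunction.norm_coe_le_norm k
  have hnormcont : Continuous fun k : ℝ => ‖G k‖ ^ 2 := (G.continuous.norm).pow 2
  have hint1 : Integrable (fun k : ℝ => ‖k‖ * ‖G k‖) := by
    simpa using G.integrable_pow_mul volume 1
  have hcont2 : ∀ t : ℝ, Continuous fun k : ℝ => 2 - 2 * Real.cos (2 * π * k * t) :=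
    fun t => continuous_const.sub (continuous_const.mul
      (Real.continuous_cos.comp (by fun_prop)))
  have hcont3 : ∀ t : ℝ, Continuous fun k : ℝ => 4 * π * k * Real.sin (2 * π * k * t) :=
    fun t => Continuous.mul (by fun_prop) (Real.continuous_sin.comp (by fun_prop))
  have hmeas : ∀ t : ℝ,
      AEStronglyMeasurable (fun k : ℝ => ‖G k‖ ^ 2 * (2 - 2 * Real.cos (2 * π * k * t))) volume :=
    fun t => (hnormcont.mul (hcont2 t)).aestronglyMeasurable
  have hmeas' : AEStronglyMeasurable
      (fun k : ℝ => ‖G k‖ ^ 2 * (4 * π * k * Real.sin (2 * π * k * u))) volume :=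
    (hnormcont.mul (hcont3 u)).aestronglyMeasurable
  have hGsq : ∀ k : ℝ, ‖G k‖ ^ 2 ≤ C * ‖G k‖ := fun k => by
    nlinarith [hC k, norm_nonneg (G k)]
  have hCnn : 0 ≤ C := (norm_nonneg (G 0)).trans (hC 0)
  have key := hasDerivAt_integral_of_dominated_loc_of_deriv_le (μ := volume) (x₀ := u)
      (F := fun t k => ‖G k‖ ^ 2 * (2 - 2 * Real.cos (2 * π * k * t)))
      (F' := fun t k => ‖G k‖ ^ 2 * (4 * π * k * Real.sin (2 * π * k * t)))
      (bound := fun k => C * (4 * π) * (‖k‖ * ‖G k‖)) (Metric.ball_mem_nhds u zero_lt_one)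
      (Filter.Eventually.of_forall hmeas) ?_ hmeas' ?_ (hint1.const_mul _) ?_
  · exact key.2
  · refine ((G.integrable.norm.const_mul C).const_mul 4).mono' (hmeas u) ?_
    filter_upwards with k
    rw [norm_mul, norm_pow, norm_norm, Real.norm_eq_abs]
    have h1 : |2 - 2 * Real.cos (2 * π * k * u)| ≤ 4 := by
      have := Real.neg_one_le_cos (2 * π * k * u)
      have := Real.cos_le_one (2 * π * k * u)
      rw [abs_le]; constructor <;> nlinarith
    calc ‖G k‖ ^ 2 * |2 - 2 * Real.cos (2 * π * k * u)|
        ≤ (C * ‖G k‖) * 4 :=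
          mul_le_mul (hGsq k) h1 (abs_nonneg _) (by positivity)
      _ = 4 * (C * ‖G k‖) := by ring
  · filter_upwards with k t _
    rw [norm_mul, norm_pow, norm_norm]
    have h1 : ‖4 * π * k * Real.sin (2 * π * k * t)‖ ≤ 4 * π * ‖k‖ := by
      rw [norm_mul]
      calc ‖4 * π * k‖ * ‖Real.sin (2 * π * k * t)‖
          ≤ (4 * π * ‖k‖) * 1 := by
            apply mul_le_mul _ _ (norm_nonneg _) (by positivity)
            · rw [Real.norm_eq_abs, Real.norm_eq_abs, abs_mul, abs_mul,
                _root_.abs_of_nonneg pi_pos.le, _root_.abs_of_nonneg (by norm_num : (0:ℝ) ≤ 4)]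
            · simpa [Real.norm_eq_abs] using Real.abs_sin_le_one (2 * π * k * t)
        _ = 4 * π * ‖k‖ := mul_one _
    calc ‖G k‖ ^ 2 * ‖4 * π * k * Real.sin (2 * π * k * t)‖
        ≤ (C * ‖G k‖) * (4 * π * ‖k‖) :=
          mul_le_mul (hGsq k) h1 (norm_nonneg _) (by positivity)
      _ = C * (4 * π) * (‖k‖ * ‖G k‖) := by ring
  · filter_upwards with k t _
    have hin : HasDerivAt (fun t : ℝ => 2 * π * k * t) (2 * π * k) t := by
      simpa using (hasDerivAt_id t).const_mul (2 * π * k)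
    have hcos := hin.cos
    have h2 := (hasDerivAt_const t (2 : ℝ)).sub (hcos.const_mul (2 : ℝ))
    have h3 := h2.const_mul (‖G k‖ ^ 2)
    convert h3 using 1
    · rfl
    · rfl
    ring

end Stmt4Aux

open Stmt4Aux

theorem stmt_4 (f : SchwartzMap ℝ ℝ) (u : ℝ) :
    HasDerivAt (fun u : ℝ => ∫ x, (f x - f (x + u)) ^ 2)
      (∫ k, ‖𝓕 (fun x => (f x : ℂ)) k‖ ^ 2 * (4 * π * k * Real.sin (2 * π * k * u))) u := by
  have hG : ⇑(SchwartzMap.fourierTransformCLM ℂ (toC f)) = 𝓕 (fun x => (f x : ℂ)) := by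
    rw [SchwartzMap.fourierTransformCLM_apply, SchwartzMap.fourier_coe, toC_coe]
  have hB := stepB (SchwartzMap.fourierTransformCLM ℂ (toC f)) u
  rw [hG] at hB
  have : (fun u : ℝ => ∫ x, (f x - f (x + u)) ^ 2) =
      fun t : ℝ => ∫ k, ‖𝓕 (fun x => (f x : ℂ)) k‖ ^ 2 * (2 - 2 * Real.cos (2 * π * k * t)) :=
    funext fun v => stepA f v
  rw [this]
  exact hB
end

section
/- Let f, N : ℝ → ℝ be real-valued Schwartz functions and define the filtered alignment loss L̃₁d(u) = ∫ ((N ∗ f)(x) − (N ∗ f)(x + u))² dx, where ∗ denotes convolution on ℝ. Then L̃₁d is differentiable at every u ∈ ℝ and (d/du) L̃₁d(u) = ∫ ‖𝓕N(k)‖² · ‖𝓕f(k)‖² · H(u, k) dk, where H(u, k) = 4πk·sin(2πku). -/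
open MeasureTheory Real Complex
open scoped FourierTransform Convolution ComplexConjugate

noncomputable section

namespace Stmt6Aux

/-- Complexification of a real Schwartz function. -/
def toC (f : SchwartzMap ℝ ℝ) : SchwartzMap ℝ ℂ where
  toFun x := (f x : ℂ)
  smooth' := Complex.ofRealCLM.contDiff.comp f.smooth'
  decay' := by
    intro k n
    obtain ⟨C, hC⟩ := f.decay' k n
    refine ⟨C, fun x => ?_⟩
    have : (fun x : ℝ => ((f x : ℝ) : ℂ)) = (RCLike.ofRealLI (K := ℂ)) ∘ f := rfl
    rw [this, (RCLike.ofRealLI (K := ℂ)).norm_iteratedFDeriv_comp_left (f.smooth ⊤).contDiffAt (mod_cast le_top)]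
    exact hC x

@[simp] lemma toC_apply (f : SchwartzMap ℝ ℝ) (x : ℝ) : toC f x = (f x : ℂ) := rfl

lemma bddAbove_range_norm (φ : SchwartzMap ℝ ℂ) : BddAbove (Set.range fun x => ‖φ x‖) := by
  refine ⟨SchwartzMap.seminorm ℝ 0 0 φ, ?_⟩
  rintro r ⟨x, rfl⟩
  exact φ.norm_le_seminorm ℝ x


lemma fourier_conj (ψ : ℝ → ℂ) (x : ℝ) :
    𝓕 (fun k => conj (ψ k)) x = conj (𝓕⁻ ψ x) := by
  rw [Real.fourier_real_eq_integral_exp_smul, Real.fourierInv_eq',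
    ← integral_conj]
  congr 1
  ext k
  rw [smul_eq_mul, smul_eq_mul, map_mul, ← Complex.exp_conj]
  have : (starRingEnd ℂ) (↑(2 * π * (inner ℝ k x : ℝ)) * Complex.I)
      = ↑(-2 * π * k * x) * Complex.I := by
    simp only [map_mul, Complex.conj_I, Complex.conj_ofReal, RCLike.inner_apply,
      conj_trivial]
    push_cast
    ring
  rw [this]

lemma parseval {ψ : ℝ → ℂ} (hc : Continuous ψ) (hi : Integrable ψ)
    (hFi : Integrable (𝓕 ψ)) :
    ∫ x, ‖ψ x‖ ^ 2 = ∫ k, ‖𝓕 ψ k‖ ^ 2 := by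
  have hw : Integrable (fun k => conj (𝓕 ψ k)) :=
    hFi.congr' (Complex.continuous_conj.comp_aestronglyMeasurable hFi.aestronglyMeasurable)
      (.of_forall fun k => (RCLike.norm_conj _).symm)
  have hmul := VectorFourier.integral_bilin_fourierIntegral_eq_flip
      (μ := (volume : Measure ℝ)) (ν := (volume : Measure ℝ))
      (L := innerₗ ℝ) (f := ψ) (g := fun k => conj (𝓕 ψ k))
      (ContinuousLinearMap.mul ℂ ℂ) Real.continuous_fourierChar
      continuous_inner hi hw
  rw [flip_innerₗ] at hmul
  have h2 : ∀ x, VectorFourier.fourierIntegral 𝐞 volume (innerₗ ℝ)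
      (fun k => conj (𝓕 ψ k)) x = conj (ψ x) := by
    intro x
    have h3 : 𝓕 (fun k => conj (𝓕 ψ k)) x = conj (𝓕⁻ (𝓕 ψ) x) := fourier_conj _ x
    rw [show VectorFourier.fourierIntegral 𝐞 volume (innerₗ ℝ) (fun k => conj (𝓕 ψ k)) x
        = 𝓕 (fun k => conj (𝓕 ψ k)) x from rfl, h3,
      hi.fourierInv_fourier_eq hFi hc.continuousAt]
  simp only [h2, ContinuousLinearMap.mul_apply'] at hmul
  have norm_eq : ∀ z : ℂ, z * conj z = ((‖z‖ ^ 2 : ℝ) : ℂ) := by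
    intro z
    rw [Complex.mul_conj, ← Complex.sq_norm]
  have h5 : (∫ x, ψ x * conj (ψ x)) = ((∫ x, ‖ψ x‖ ^ 2 : ℝ) : ℂ) := by
    rw [integral_congr_ae (.of_forall fun x => norm_eq (ψ x))]
    exact integral_ofReal
  have h6 : (∫ k, 𝓕 ψ k * conj (𝓕 ψ k)) = ((∫ k, ‖𝓕 ψ k‖ ^ 2 : ℝ) : ℂ) := by
    rw [integral_congr_ae (.of_forall fun k => norm_eq (𝓕 ψ k))]
    exact integral_ofReal
  apply Complex.ofReal_inj.mp
  rw [← h5, ← h6]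
  exact hmul.symm

section Conv

variable (a b : SchwartzMap ℝ ℂ)

lemma conv_eq : (fun x => ∫ y, a y * b (x - y))
    = (⇑a ⋆[ContinuousLinearMap.mul ℂ ℂ, volume] ⇑b) := rfl

lemma integrable_conv : Integrable (fun x => ∫ y, a y * b (x - y)) := by
  rw [conv_eq]
  exact a.integrable.integrable_convolution (ContinuousLinearMap.mul ℂ ℂ) b.integrable

lemma continuous_conv : Continuous (fun x => ∫ y, a y * b (x - y)) := by
  rw [conv_eq]
  exact (bddAbove_range_norm b).continuous_convolution_right_of_integrable
    (ContinuousLinearMap.mul ℂ ℂ) a.integrable b.continuous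

lemma fourier_conv (k : ℝ) :
    𝓕 (fun x => ∫ y, a y * b (x - y)) k = 𝓕 ⇑a k * 𝓕 ⇑b k := by
  have hib : Integrable (fun p : ℝ × ℝ => a p.2 * b (p.1 - p.2)) (volume.prod volume) :=
    a.integrable.convolution_integrand (ContinuousLinearMap.mul ℂ ℂ) b.integrable
  have hcont : Continuous (Function.uncurry fun x y : ℝ =>
      Complex.exp (↑(-2 * π * x * k) * Complex.I) * (a y * b (x - y))) := by
    apply Continuous.mul
    · exact Complex.continuous_exp.comp
        ((Complex.continuous_ofReal.comp (by continuity)).mul continuous_const)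
    · exact (a.continuous.comp continuous_snd).mul
        (b.continuous.comp (continuous_fst.sub continuous_snd))
  have hInt : Integrable (Function.uncurry fun x y : ℝ =>
      Complex.exp (↑(-2 * π * x * k) * Complex.I) * (a y * b (x - y)))
      (volume.prod volume) := by
    refine hib.norm.mono' hcont.aestronglyMeasurable (.of_forall fun p => ?_)
    rw [Function.uncurry_apply_pair, norm_mul,
      Complex.norm_exp_ofReal_mul_I, one_mul]
  have hFb : 𝓕 ⇑b k = ∫ x, Complex.exp (↑(-2 * π * x * k) * Complex.I) * b x := by
    rw [Real.fourier_real_eq_integral_exp_smul]; simp_rw [smul_eq_mul]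
  have hFa : 𝓕 ⇑a k = ∫ y, Complex.exp (↑(-2 * π * y * k) * Complex.I) * a y := by
    rw [Real.fourier_real_eq_integral_exp_smul]; simp_rw [smul_eq_mul]
  have step1 : 𝓕 (fun x => ∫ y, a y * b (x - y)) k
      = ∫ x, ∫ y, Complex.exp (↑(-2 * π * x * k) * Complex.I) * (a y * b (x - y)) := by
    rw [Real.fourier_real_eq_integral_exp_smul]
    simp_rw [smul_eq_mul, ← integral_const_mul]
  rw [step1, integral_integral_swap hInt, hFa, hFb, ← integral_mul_const]
  refine integral_congr_ae (.of_forall fun y => ?_)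
  dsimp only
  have h2 := integral_add_right_eq_self (μ := (volume : Measure ℝ))
    (fun x => Complex.exp (↑(-2 * π * x * k) * Complex.I) * (a y * b (x - y))) y
  have h3 : ∀ x : ℝ, Complex.exp (↑(-2 * π * (x + y) * k) * Complex.I) * (a y * b (x + y - y))
      = (Complex.exp (↑(-2 * π * y * k) * Complex.I) * a y)
        * (Complex.exp (↑(-2 * π * x * k) * Complex.I) * b x) := by
    intro x
    rw [add_sub_cancel_right,
      show (↑(-2 * π * (x + y) * k) : ℂ) * Complex.I
        = ↑(-2 * π * y * k) * Complex.I + ↑(-2 * π * x * k) * Complex.I by push_cast; ring,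
      Complex.exp_add]
    ring
  calc (∫ x, Complex.exp (↑(-2 * π * x * k) * Complex.I) * (a y * b (x - y)))
      = ∫ x, (fun x => Complex.exp (↑(-2 * π * x * k) * Complex.I) * (a y * b (x - y))) (x + y) :=
        h2.symm
    _ = ∫ x, (Complex.exp (↑(-2 * π * y * k) * Complex.I) * a y)
          * (Complex.exp (↑(-2 * π * x * k) * Complex.I) * b x) := by
        refine integral_congr_ae (.of_forall fun x => ?_)
        dsimp only
        exact h3 x
    _ = _ := integral_const_mul _ _

end Conv

lemma claim (f N : SchwartzMap ℝ ℝ) (u : ℝ) :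
    ∫ x, ((∫ y, N y * f (x - y)) - (∫ y, N y * f (x + u - y))) ^ 2
      = ∫ k, ‖𝓕 ⇑(toC N) k‖ ^ 2 * ‖𝓕 ⇑(toC f) k‖ ^ 2
          * (2 - 2 * Real.cos (2 * π * k * u)) := by
  set a := toC N with ha
  set b := toC f with hb
  set g : ℝ → ℂ := fun x => ∫ y, a y * b (x - y) with hgdef
  have hgre : ∀ x : ℝ, g x = ((∫ y, N y * f (x - y) : ℝ) : ℂ) := by
    intro x
    have hpt : ∀ y : ℝ, a y * b (x - y) = ((N y * f (x - y) : ℝ) : ℂ) := by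
      intro y; simp [ha, hb]
    rw [hgdef]
    dsimp only
    rw [integral_congr_ae (.of_forall hpt)]
    exact integral_ofReal
  have hint_g : Integrable g := integrable_conv a b
  have hcont_g : Continuous g := continuous_conv a b
  set ψ : ℝ → ℂ := fun x => g x - g (x + u) with hψdef
  have hcont : Continuous ψ := hcont_g.sub (hcont_g.comp (continuous_id.add continuous_const))
  have hint_tr : Integrable (fun x => g (x + u)) := hint_g.comp_add_right u
  have hint : Integrable ψ := hint_g.sub hint_tr
  have hFg : ∀ k : ℝ, 𝓕 g k = 𝓕 ⇑a k * 𝓕 ⇑b k := fun k => fourier_conv a b k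
  have hFtrans : ∀ k : ℝ, 𝓕 (fun x => g (x + u)) k = (𝐞 (u * k) : ℂ) * 𝓕 g k := by
    intro k
    have h0 := congrFun (VectorFourier.fourierIntegral_comp_add_right 𝐞
      (volume : Measure ℝ) (innerₗ ℝ) g u) k
    have h1 : (innerₗ ℝ) u k = u * k := by
      simp [RCLike.inner_apply, conj_trivial, mul_comm]
    rw [show (g ∘ fun v => v + u) = fun x => g (x + u) from rfl] at h0
    rw [show 𝓕 (fun x => g (x + u)) k
      = VectorFourier.fourierIntegral 𝐞 volume (innerₗ ℝ) (fun x => g (x + u)) k from rfl, h0,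
      h1, Circle.smul_def, smul_eq_mul]
    rfl
  have hFψ : ∀ k : ℝ, 𝓕 ψ k = (1 - (𝐞 (u * k) : ℂ)) * (𝓕 ⇑a k * 𝓕 ⇑b k) := by
    intro k
    have hi1 : Integrable (fun v : ℝ => 𝐞 (-(inner ℝ v k : ℝ)) • g v) :=
      (Real.fourierIntegral_convergent_iff k).2 hint_g
    have hi2 : Integrable (fun v : ℝ => 𝐞 (-(inner ℝ v k : ℝ)) • g (v + u)) :=
      (Real.fourierIntegral_convergent_iff k).2 hint_tr
    have hsub : 𝓕 ψ k = 𝓕 g k - 𝓕 (fun x => g (x + u)) k := by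
      rw [Real.fourier_eq, Real.fourier_eq, Real.fourier_eq,
        ← integral_sub hi1 hi2]
      refine integral_congr_ae (.of_forall fun x => ?_)
      rw [hψdef]
      dsimp only
      rw [smul_sub]
    rw [hsub, hFtrans k, hFg k]
    ring
  have hnorm : ∀ k : ℝ, ‖𝓕 ψ k‖ ^ 2
      = ‖𝓕 ⇑a k‖ ^ 2 * ‖𝓕 ⇑b k‖ ^ 2 * (2 - 2 * Real.cos (2 * π * k * u)) := by
    intro k
    rw [hFψ k, norm_mul, norm_mul, mul_pow, mul_pow]
    have h1 : ‖1 - (𝐞 (u * k) : ℂ)‖ ^ 2 = 2 - 2 * Real.cos (2 * π * k * u) := by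
      rw [Real.fourierChar_apply]
      rw [show ((2 * π * (u * k) : ℝ) : ℂ) * Complex.I = ((2 * π * k * u : ℝ) : ℂ) * Complex.I by
        push_cast; ring]
      rw [Complex.sq_norm, Complex.normSq_apply, Complex.sub_re,
        Complex.sub_im, Complex.one_re, Complex.one_im, Complex.exp_ofReal_mul_I_re,
        Complex.exp_ofReal_mul_I_im]
      nlinarith [Real.sin_sq_add_cos_sq (2 * π * k * u)]
    rw [h1]
    ring
  set A := SchwartzMap.fourierTransformCLM ℂ a with hA
  set B := SchwartzMap.fourierTransformCLM ℂ b with hB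
  have hAapp : ∀ k, 𝓕 ⇑a k = A k := fun k => rfl
  have hBapp : ∀ k, 𝓕 ⇑b k = B k := fun k => rfl
  have hABint : Integrable (fun k => A k * B k) :=
    B.integrable.bdd_mul A.continuous.aestronglyMeasurable
      (.of_forall fun x => A.norm_le_seminorm ℝ x)
  have hFψ_int : Integrable (𝓕 ψ) := by
    have heq : 𝓕 ψ = fun k => (1 - (𝐞 (u * k) : ℂ)) * (A k * B k) := by
      funext k; rw [hFψ k, hAapp k, hBapp k]
    rw [heq]
    refine hABint.bdd_mul (c := 2) ?_ (.of_forall fun k => ?_)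
    · refine Continuous.aestronglyMeasurable (continuous_const.sub ?_)
      exact continuous_subtype_val.comp
        (Real.continuous_fourierChar.comp (continuous_const.mul continuous_id))
    · calc ‖1 - (𝐞 (u * k) : ℂ)‖ ≤ ‖(1 : ℂ)‖ + ‖((𝐞 (u * k) : Circle) : ℂ)‖ := norm_sub_le _ _
        _ ≤ 2 := by
            rw [norm_one, Circle.norm_coe]
            norm_num
  have hL : ∫ x, ((∫ y, N y * f (x - y)) - (∫ y, N y * f (x + u - y))) ^ 2
      = ∫ x, ‖ψ x‖ ^ 2 := by
    refine integral_congr_ae (.of_forall fun x => ?_)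
    dsimp only
    have hx : ψ x = ((((∫ y, N y * f (x - y)) - (∫ y, N y * f (x + u - y))) : ℝ) : ℂ) := by
      rw [hψdef]
      dsimp only
      rw [hgre x, hgre (x + u), ← Complex.ofReal_sub]
    rw [hx, Complex.norm_real, Real.norm_eq_abs, _root_.sq_abs]
  rw [hL, parseval hcont hint hFψ_int]
  exact integral_congr_ae (.of_forall fun k => hnorm k)

lemma deriv_side (A B : SchwartzMap ℝ ℂ) (u : ℝ) :
    HasDerivAt (fun v : ℝ => ∫ k, ‖A k‖ ^ 2 * ‖B k‖ ^ 2 * (2 - 2 * Real.cos (2 * π * k * v)))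
      (∫ k, ‖A k‖ ^ 2 * ‖B k‖ ^ 2 * (4 * π * k * Real.sin (2 * π * k * u))) u := by
  set P : ℝ → ℝ := fun k => ‖A k‖ ^ 2 * ‖B k‖ ^ 2 with hP
  have hPnn : ∀ k, 0 ≤ P k := fun k => by positivity
  have hPcont : Continuous P := (A.continuous.norm.pow 2).mul (B.continuous.norm.pow 2)
  set CA := SchwartzMap.seminorm ℝ 0 0 A with hCA
  set CB := SchwartzMap.seminorm ℝ 0 0 B with hCB
  have hCA0 : (0 : ℝ) ≤ CA := (norm_nonneg (A 0)).trans (A.norm_le_seminorm ℝ 0)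
  have hCB0 : (0 : ℝ) ≤ CB := (norm_nonneg (B 0)).trans (B.norm_le_seminorm ℝ 0)
  have hPle : ∀ k, P k ≤ CA * CB ^ 2 * ‖A k‖ := by
    intro k
    have h1 : ‖A k‖ ≤ CA := A.norm_le_seminorm ℝ k
    have h2 : ‖B k‖ ≤ CB := B.norm_le_seminorm ℝ k
    have key1 : ‖A k‖ * (‖B k‖ * ‖B k‖) ≤ CA * (CB * CB) :=
      mul_le_mul h1 (mul_le_mul h2 h2 (norm_nonneg _) hCB0)
        (mul_nonneg (norm_nonneg _) (norm_nonneg _)) hCA0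
    have keyeq : P k = (‖A k‖ * (‖B k‖ * ‖B k‖)) * ‖A k‖ := by simp only [hP]; ring
    rw [keyeq, show CA * CB ^ 2 * ‖A k‖ = (CA * (CB * CB)) * ‖A k‖ by ring]
    exact mul_le_mul_of_nonneg_right key1 (norm_nonneg _)
  have hPint : Integrable P := by
    refine (((A.integrable (μ := volume)).norm.const_mul (CA * CB ^ 2)).mono'
      hPcont.aestronglyMeasurable (.of_forall fun k => ?_))
    rw [Real.norm_eq_abs, _root_.abs_of_nonneg (hPnn k)]
    exact hPle k
  have hkPint : Integrable (fun k : ℝ => |k| * P k) := by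
    have base := A.integrable_pow_mul (volume : Measure ℝ) 1
    refine (((base.const_mul (CA * CB ^ 2)).mono'
      ((continuous_abs.mul hPcont).aestronglyMeasurable) (.of_forall fun k => ?_)))
    rw [Real.norm_eq_abs, _root_.abs_of_nonneg (mul_nonneg (abs_nonneg k) (hPnn k))]
    calc |k| * P k ≤ |k| * (CA * CB ^ 2 * ‖A k‖) :=
          mul_le_mul_of_nonneg_left (hPle k) (abs_nonneg k)
      _ = CA * CB ^ 2 * (‖k‖ ^ 1 * ‖A k‖) := by rw [pow_one, Real.norm_eq_abs]; ring
  show HasDerivAt (fun v : ℝ => ∫ k, P k * (2 - 2 * Real.cos (2 * π * k * v)))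
      (∫ k, P k * (4 * π * k * Real.sin (2 * π * k * u))) u
  have hcos_cont : ∀ v : ℝ, Continuous fun k : ℝ => 2 - 2 * Real.cos (2 * π * k * v) := by
    intro v
    exact continuous_const.sub (continuous_const.mul
      (Real.continuous_cos.comp (((continuous_const.mul continuous_id).mul continuous_const))))
  have hsin_cont : Continuous fun k : ℝ => 4 * π * k * Real.sin (2 * π * k * u) := by
    exact ((continuous_const.mul continuous_id).mul
      (Real.continuous_sin.comp ((continuous_const.mul continuous_id).mul continuous_const)))
  have main := hasDerivAt_integral_of_dominated_loc_of_deriv_le (μ := (volume : Measure ℝ))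
      (F := fun v k => P k * (2 - 2 * Real.cos (2 * π * k * v)))
      (F' := fun v k => P k * (4 * π * k * Real.sin (2 * π * k * v)))
      (x₀ := u) (bound := fun k => 4 * π * (|k| * P k)) (s := Metric.ball u 1) (Metric.ball_mem_nhds u one_pos)
      (.of_forall fun v => (hPcont.mul (hcos_cont v)).aestronglyMeasurable)
      ?_ (hPcont.mul hsin_cont).aestronglyMeasurable ?_ ?_ ?_
  · exact main.2
  · -- integrability at u
    refine ((hPint.const_mul 4).mono'
      ((hPcont.mul (hcos_cont u)).aestronglyMeasurable) (.of_forall fun k => ?_))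
    rw [Real.norm_eq_abs, abs_mul, _root_.abs_of_nonneg (hPnn k)]
    have hb : |2 - 2 * Real.cos (2 * π * k * u)| ≤ 4 := by
      have h1 := Real.neg_one_le_cos (2 * π * k * u)
      have h2 := Real.cos_le_one (2 * π * k * u)
      rw [abs_le]
      constructor <;> nlinarith
    calc P k * |2 - 2 * Real.cos (2 * π * k * u)| ≤ P k * 4 :=
          mul_le_mul_of_nonneg_left hb (hPnn k)
      _ = 4 * P k := by ring
  · -- bound
    refine .of_forall fun k => fun v _ => ?_
    rw [Real.norm_eq_abs, abs_mul, _root_.abs_of_nonneg (hPnn k)]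
    have h4 : |4 * π * k * Real.sin (2 * π * k * v)| ≤ 4 * π * |k| := by
      rw [abs_mul]
      have he : |4 * π * k| = 4 * π * |k| := by
        rw [abs_mul, _root_.abs_of_nonneg (by positivity : (0:ℝ) ≤ 4 * π)]
      rw [he]
      calc 4 * π * |k| * |Real.sin (2 * π * k * v)| ≤ 4 * π * |k| * 1 := by
            exact mul_le_mul_of_nonneg_left (Real.abs_sin_le_one _) (by positivity)
        _ = 4 * π * |k| := mul_one _
    calc P k * |4 * π * k * Real.sin (2 * π * k * v)| ≤ P k * (4 * π * |k|) :=
          mul_le_mul_of_nonneg_left h4 (hPnn k)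
      _ = 4 * π * (|k| * P k) := by ring
  · exact hkPint.const_mul (4 * π)
  · -- differentiability
    refine .of_forall fun k => fun v _ => ?_
    have h1 : HasDerivAt (fun v : ℝ => 2 * π * k * v) (2 * π * k) v := by
      simpa using (hasDerivAt_id v).const_mul (2 * π * k)
    have h2 := h1.cos
    have h3 := (hasDerivAt_const v (2 : ℝ)).sub (h2.const_mul (2 : ℝ))
    have h4 := h3.const_mul (P k)
    convert h4 using 1
    · rfl
    · rfl
    ring

end Stmt6Aux

theorem stmt_6 (f N : SchwartzMap ℝ ℝ) (u : ℝ) :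
    HasDerivAt
      (fun u : ℝ => ∫ x,
        ((∫ y, N y * f (x - y)) - (∫ y, N y * f (x + u - y))) ^ 2)
      (∫ k, ‖𝓕 (fun x => (N x : ℂ)) k‖ ^ 2 * ‖𝓕 (fun x => (f x : ℂ)) k‖ ^ 2 *
        (4 * π * k * Real.sin (2 * π * k * u))) u := by
  rw [funext (Stmt6Aux.claim f N)]
  exact Stmt6Aux.deriv_side (SchwartzMap.fourierTransformCLM ℂ (Stmt6Aux.toC N))
    (SchwartzMap.fourierTransformCLM ℂ (Stmt6Aux.toC f)) u
end
end

section
/- Let f : ℝ → ℝ be a real-valued Schwartz function, let K > 0, and suppose 𝓕f(k) = 0 for all k with |k| > K (the signal is band-limited to [−K, K]). Define L₁d(u) = ∫ (f(x) − f(x + u))² dx. Then for every u with |u| < 1/(2K), the derivative satisfies u · (d/du) L₁d(u) ≥ 0; that is, the gradient of the alignment loss points toward the global optimum u = 0 throughout the interval (−1/(2K), 1/(2K)). -/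
open MeasureTheory Real
open scoped FourierTransform

private lemma mul_sin_nonneg' {t : ℝ} (ht : |t| ≤ π) : 0 ≤ t * Real.sin t := by
  rcases le_or_gt 0 t with h | h
  · exact mul_nonneg h (Real.sin_nonneg_of_nonneg_of_le_pi h (abs_le.1 ht).2)
  · have h1 : 0 ≤ -t := by linarith
    have h2 : -t ≤ π := by have := (abs_le.1 ht).1; linarith
    have h3 : 0 ≤ Real.sin (-t) := Real.sin_nonneg_of_nonneg_of_le_pi h1 h2
    rw [Real.sin_neg] at h3
    have hs : Real.sin t ≤ 0 := by linarith
    nlinarith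

theorem stmt_8 (f : SchwartzMap ℝ ℝ) (K : ℝ) (hK : 0 < K)
    (hband : ∀ k : ℝ, K < |k| → 𝓕 (fun x => (f x : ℂ)) k = 0)
    (u : ℝ) (hu : |u| < 1 / (2 * K)) :
    0 ≤ u * deriv (fun u : ℝ => ∫ x, (f x - f (x + u)) ^ 2) u := by
  classical
  set fc : ℝ → ℂ := fun x => (f x : ℂ) with hfc_def
  have hfc_cont : Continuous fc := Complex.continuous_ofReal.comp f.continuous
  have hfc_int : Integrable fc := f.integrable.ofReal
  set g : ℝ → ℂ := 𝓕 fc with hg_def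
  have hg_cont : Continuous g :=
    VectorFourier.fourierIntegral_continuous Real.continuous_fourierChar
      (by exact continuous_inner) hfc_int
  have hg_band : ∀ k : ℝ, K < |k| → g k = 0 := hband
  have hg_supp : HasCompactSupport g := by
    apply HasCompactSupport.intro (isCompact_Icc (a := -K) (b := K))
    intro k hk
    apply hg_band
    simp only [Set.mem_Icc, not_and_or, not_le] at hk
    rcases hk with h | h
    · rw [abs_of_neg (by linarith)]; linarith
    · rw [abs_of_pos (by linarith)]; linarith
  have hg_int : Integrable g := hg_cont.integrable_of_hasCompactSupport hg_supp
  set G : ℝ → ℝ := fun k => ‖g k‖ ^ 2 with hG_def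
  have hG_cont : Continuous G := (hg_cont.norm).pow 2
  have hG_supp : HasCompactSupport G := by
    apply hg_supp.comp_left (g := fun z : ℂ => ‖z‖ ^ 2) (by simp)
  have hG_int : Integrable G := hG_cont.integrable_of_hasCompactSupport hG_supp
  have hG_nonneg : ∀ k, 0 ≤ G k := fun k => by positivity
  -- Fourier inversion
  have hinv : ∀ x : ℝ, 𝓕⁻ g x = fc x := by
    intro x
    rw [hg_def, hfc_cont.fourierInv_fourier_eq hfc_int (by rw [← hg_def]; exact hg_int)]
  -- bounds for f
  obtain ⟨C, hC⟩ : ∃ C, ∀ x, ‖f x‖ ≤ C :=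
    ⟨SchwartzMap.seminorm ℝ 0 0 f, fun x => SchwartzMap.norm_le_seminorm ℝ f x⟩
  have hint1 : Integrable (fun x : ℝ => (f x) ^ 2) := by
    have := (f.integrable (μ := volume)).bdd_mul f.continuous.aestronglyMeasurable (ae_of_all _ hC)
    simpa [pow_two] using this
  have hint2 : ∀ v : ℝ, Integrable (fun x : ℝ => f x * f (x + v)) := by
    intro v
    exact ((f.integrable (μ := volume)).comp_add_right v).bdd_mul
      f.continuous.aestronglyMeasurable (ae_of_all _ hC)
  have hint3 : ∀ v : ℝ, Integrable (fun x : ℝ => (f (x + v)) ^ 2) :=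
    fun v => hint1.comp_add_right v
  -- expansion of the loss
  have hexp : ∀ v : ℝ, (∫ x, (f x - f (x + v)) ^ 2)
      = 2 * (∫ x, (f x) ^ 2) - 2 * (∫ x, f x * f (x + v)) := by
    intro v
    have h1 : (fun x : ℝ => (f x - f (x + v)) ^ 2)
        = fun x => ((f x) ^ 2 + (f (x + v)) ^ 2) - 2 * (f x * f (x + v)) := by
      funext x; ring
    have hadd : Integrable (fun x : ℝ => (f x) ^ 2 + (f (x + v)) ^ 2) := hint1.add (hint3 v)
    have hmul : Integrable (fun x : ℝ => 2 * (f x * f (x + v))) := (hint2 v).const_mul 2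
    rw [h1, integral_sub hadd hmul, integral_add hint1 (hint3 v), integral_const_mul,
      integral_add_right_eq_self (fun x : ℝ => (f x) ^ 2) v]
    ring
  -- autocorrelation via Fourier
  have hauto : ∀ v : ℝ, (∫ x, f x * f (x + v))
      = ∫ k, G k * Real.cos (2 * π * (k * v)) := by
    intro v
    -- complex version
    have hgneg : ∀ k : ℝ, g (-k) = (starRingEnd ℂ) (g k) := by
      intro k
      rw [hg_def]
      rw [Real.fourier_real_eq_integral_exp_smul,
        Real.fourier_real_eq_integral_exp_smul, ← integral_conj]
      congr 1
      funext x
      rw [smul_eq_mul, smul_eq_mul, map_mul, ← Complex.exp_conj]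
      congr 1
      · congr 1
        rw [map_mul, Complex.conj_ofReal, Complex.conj_I]
        push_cast
        ring
      · simp [hfc_def, Complex.conj_ofReal]
    have step1 : ((∫ x, f x * f (x + v) : ℝ) : ℂ) = ∫ x, fc x * fc (x + v) := by
      have h : (fun x : ℝ => fc x * fc (x + v)) = fun x : ℝ => ((f x * f (x + v) : ℝ) : ℂ) := by
        funext x; simp [hfc_def]
      rw [h]
      exact integral_ofReal.symm
    have step2 : ∀ x : ℝ, fc (x + v)
        = ∫ k, Complex.exp ((2 * π * (k * (x + v)) : ℝ) * Complex.I) * g k := by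
      intro x
      rw [← hinv (x + v), Real.fourierInv_eq']
      congr 1
      funext k
      rw [smul_eq_mul, Real.inner_apply]
    have hFint : Integrable (fun p : ℝ × ℝ =>
        fc p.1 * (Complex.exp ((2 * π * (p.2 * (p.1 + v)) : ℝ) * Complex.I) * g p.2))
        (volume.prod volume) := by
      have hbnd : Integrable (fun p : ℝ × ℝ => ‖fc p.1‖ * ‖g p.2‖) (volume.prod volume) :=
        hfc_int.norm.mul_prod hg_int.norm
      apply hbnd.mono'
      · apply Continuous.aestronglyMeasurable
        fun_prop
      · refine ae_of_all _ fun p => ?_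
        rw [norm_mul, norm_mul, Complex.norm_exp_ofReal_mul_I, one_mul]
    have step3 : (∫ x, fc x * fc (x + v))
        = ∫ k, Complex.exp ((2 * π * (k * v) : ℝ) * Complex.I) * (g k * (starRingEnd ℂ) (g k)) := by
      calc (∫ x, fc x * fc (x + v))
          = ∫ x, ∫ k, fc x * (Complex.exp ((2 * π * (k * (x + v)) : ℝ) * Complex.I) * g k) := by
            congr 1; funext x
            rw [step2 x, ← integral_const_mul]
        _ = ∫ k, ∫ x, fc x * (Complex.exp ((2 * π * (k * (x + v)) : ℝ) * Complex.I) * g k) :=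
            integral_integral_swap hFint
        _ = ∫ k, Complex.exp ((2 * π * (k * v) : ℝ) * Complex.I) * (g k * (starRingEnd ℂ) (g k)) := by
            congr 1; funext k
            have hsplit : ∀ x : ℝ, fc x * (Complex.exp ((2 * π * (k * (x + v)) : ℝ) * Complex.I) * g k)
                = (Complex.exp ((2 * π * (k * v) : ℝ) * Complex.I) * g k)
                  * (Complex.exp ((2 * π * (k * x) : ℝ) * Complex.I) * fc x) := by
              intro x
              have he : ((2 * π * (k * (x + v)) : ℝ) : ℂ) * Complex.I
                  = ((2 * π * (k * v) : ℝ) : ℂ) * Complex.I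
                    + ((2 * π * (k * x) : ℝ) : ℂ) * Complex.I := by
                push_cast; ring
              rw [he, Complex.exp_add]; ring
            simp_rw [hsplit]
            rw [integral_const_mul]
            have hfour : (∫ x, Complex.exp ((2 * π * (k * x) : ℝ) * Complex.I) * fc x)
                = g (-k) := by
              rw [hg_def, Real.fourier_real_eq_integral_exp_smul]
              congr 1
              funext x
              rw [smul_eq_mul]
              congr 2
              push_cast
              ring
            rw [hfour, hgneg k]
            ring
    have hnormsq : ∀ k : ℝ, g k * (starRingEnd ℂ) (g k) = ((G k : ℝ) : ℂ) := by
      intro k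
      rw [Complex.mul_conj]
      norm_cast
      simp [hG_def, Complex.normSq_eq_norm_sq]
    have hRHSint : Integrable (fun k : ℝ =>
        Complex.exp ((2 * π * (k * v) : ℝ) * Complex.I) * ((G k : ℝ) : ℂ)) := by
      apply hG_int.mono'
      · apply Continuous.aestronglyMeasurable
        fun_prop
      · refine ae_of_all _ fun k => ?_
        rw [norm_mul, Complex.norm_exp_ofReal_mul_I, one_mul, Complex.norm_real,
          Real.norm_eq_abs, abs_of_nonneg (hG_nonneg k)]
    have final : ((∫ x, f x * f (x + v) : ℝ) : ℂ)
        = ∫ k, Complex.exp ((2 * π * (k * v) : ℝ) * Complex.I) * ((G k : ℝ) : ℂ) := by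
      rw [step1, step3]
      congr 1; funext k; rw [hnormsq k]
    have hre := congrArg Complex.re final
    rw [Complex.ofReal_re] at hre
    rw [hre, ← RCLike.re_to_complex, ← integral_re hRHSint]
    congr 1; funext k
    simp only [RCLike.re_to_complex, Complex.mul_re, Complex.exp_ofReal_mul_I_re,
      Complex.exp_ofReal_mul_I_im, Complex.ofReal_re, Complex.ofReal_im]
    ring
  -- derivative of the correlation integral
  have hderivC : HasDerivAt (fun v : ℝ => ∫ k, G k * Real.cos (2 * π * (k * v)))
      (∫ k, G k * (-Real.sin (2 * π * (k * u)) * (2 * π * k))) u := by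
    have := hasDerivAt_integral_of_dominated_loc_of_deriv_le (μ := volume)
      (F := fun v k => G k * Real.cos (2 * π * (k * v)))
      (F' := fun v k => G k * (-Real.sin (2 * π * (k * v)) * (2 * π * k)))
      (x₀ := u) (bound := fun k => G k * (2 * π * K)) (s := Metric.ball u 1) (Metric.ball_mem_nhds u one_pos)
      (Filter.Eventually.of_forall fun v =>
        (Continuous.aestronglyMeasurable (by fun_prop)))
      (by
        apply hG_int.mono'
        · exact Continuous.aestronglyMeasurable (by fun_prop)
        · refine ae_of_all _ fun k => ?_
          rw [Real.norm_eq_abs, abs_mul, abs_of_nonneg (hG_nonneg k)]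
          calc G k * |Real.cos (2 * π * (k * u))| ≤ G k * 1 :=
                mul_le_mul_of_nonneg_left (Real.abs_cos_le_one _) (hG_nonneg k)
            _ = G k := mul_one _)
      (Continuous.aestronglyMeasurable (by fun_prop))
      (ae_of_all _ fun k v _ => by
        by_cases hk : K < |k|
        · simp [hg_band k hk, hG_def]
        · push_neg at hk
          rw [Real.norm_eq_abs, abs_mul, abs_of_nonneg (hG_nonneg k), abs_mul, abs_neg, abs_mul]
          have h1 : |Real.sin (2 * π * (k * v))| ≤ 1 := Real.abs_sin_le_one _
          have h2 : |2 * π| = 2 * π := abs_of_pos (by positivity)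
          rw [h2]
          have : |Real.sin (2 * π * (k * v))| * (2 * π * |k|) ≤ 2 * π * K := by
            calc |Real.sin (2 * π * (k * v))| * (2 * π * |k|)
                ≤ 1 * (2 * π * |k|) := mul_le_mul_of_nonneg_right h1 (by positivity)
              _ = 2 * π * |k| := one_mul _
              _ ≤ 2 * π * K := by nlinarith [Real.pi_pos]
          exact mul_le_mul_of_nonneg_left this (hG_nonneg k))
      (hG_int.mul_const _)
      (ae_of_all _ fun k v _ => by
        have h1 : HasDerivAt (fun v : ℝ => 2 * π * (k * v)) (2 * π * k) v := by
          simpa [mul_assoc] using (hasDerivAt_id v).const_mul (2 * π * k)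
        exact (h1.cos).const_mul (G k))
    exact this.2
  -- assemble
  set A := ∫ x, (f x) ^ 2 with hA
  have key : (fun v : ℝ => ∫ x, (f x - f (x + v)) ^ 2)
      = fun v => 2 * A - 2 * (∫ k, G k * Real.cos (2 * π * (k * v))) := by
    funext v; rw [hexp v, hauto v]
  have hD : HasDerivAt (fun v : ℝ => ∫ x, (f x - f (x + v)) ^ 2)
      (-(2 * ∫ k, G k * (-Real.sin (2 * π * (k * u)) * (2 * π * k)))) u := by
    rw [key]
    exact (hderivC.const_mul 2).const_sub (2 * A)
  rw [hD.deriv]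
  have hrw : u * -(2 * ∫ k, G k * (-Real.sin (2 * π * (k * u)) * (2 * π * k)))
      = ∫ k, (-(2 * u)) * (G k * (-Real.sin (2 * π * (k * u)) * (2 * π * k))) := by
    rw [integral_const_mul]
    ring
  rw [hrw]
  apply integral_nonneg
  intro k
  simp only [Pi.zero_apply]
  show 0 ≤ -(2 * u) * (G k * (-Real.sin (2 * π * (k * u)) * (2 * π * k)))
  by_cases hk : K < |k|
  · simp [hg_band k hk, hG_def]
  · push_neg at hk
    have habs : |2 * π * (k * u)| ≤ π := by
      rw [abs_mul, abs_mul, abs_mul, abs_two, abs_of_pos Real.pi_pos]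
      have h1 : |k| * |u| ≤ K * |u| := mul_le_mul_of_nonneg_right hk (abs_nonneg u)
      have h2 : K * |u| ≤ 1 / 2 := by
        have h := hu.le
        rw [le_div_iff₀ (by positivity : (0:ℝ) < 2 * K)] at h
        nlinarith
      nlinarith [Real.pi_pos, h1, h2]
    have h3 : 0 ≤ 2 * π * (k * u) * Real.sin (2 * π * (k * u)) := mul_sin_nonneg' habs
    have h4 : (-(2 * u)) * (G k * (-Real.sin (2 * π * (k * u)) * (2 * π * k)))
        = 2 * G k * (2 * π * (k * u) * Real.sin (2 * π * (k * u))) := by ring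
    rw [h4]
    exact mul_nonneg (by linarith [hG_nonneg k]) h3
end

section
/- Let n : ℤ → ℝ be a finitely supported function, R ∈ ℕ, and for each r ∈ {1, …, R} let vˣᵣ, vʸᵣ, vᶻᵣ : ℤ → ℝ and Mʸᶻᵣ, Mˣᶻᵣ, Mˣʸᵣ : ℤ × ℤ → ℝ be arbitrary. Define the VM-decomposed tensor T(x, y, z) = ∑_{r=1}^{R} vˣᵣ(x)·Mʸᶻᵣ(y, z) + vʸᵣ(y)·Mˣᶻᵣ(x, z) + vᶻᵣ(z)·Mˣʸᵣ(x, y), the isotropic kernel N₃(s, t, w) = n(s)·n(t)·n(w), 1D convolution (n ∗ v)(x) = ∑_{s ∈ supp(n)} n(s)·v(x − s), 2D convolution ((n ⊗ n) ∗₂ M)(y, z) = ∑_{t ∈ supp(n)} ∑_{w ∈ supp(n)} n(t)·n(w)·M(y − t, z − w), and 3D convolution (N₃ ∗₃ T)(x, y, z) = ∑_{s ∈ supp(n)} ∑_{t ∈ supp(n)} ∑_{w ∈ supp(n)} n(s)·n(t)·n(w)·T(x − s, y − t, z − w). Then for all x, y, z ∈ ℤ: (N₃ ∗₃ T)(x,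 y, z) = ∑_{r=1}^{R} (n ∗ vˣᵣ)(x)·((n ⊗ n) ∗₂ Mʸᶻᵣ)(y, z) + (n ∗ vʸᵣ)(y)·((n ⊗ n) ∗₂ Mˣᶻᵣ)(x, z) + (n ∗ vᶻᵣ)(z)·((n ⊗ n) ∗₂ Mˣʸᵣ)(x, y). -/
/-!
The kernel `n(s) n(t) n(w)` is a product, so against each rank-one term `a(s) b(t, w)` the triple
sum splits as `(∑ₛ n(s) a(s)) · (∑ₜ ∑_w n(t) n(w) b(t, w))`; together with linearity of the triple
sum in the signal this gives the identity term by term.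
-/

namespace Finset

variable {ι κ R : Type*} [CommSemiring R]

theorem sum_sum_sum_mul_sum (F : Finset ι) (G : Finset κ) (K : ι → ι → ι → R)
    (f : κ → ι → ι → ι → R) :
    ∑ s ∈ F, ∑ t ∈ F, ∑ w ∈ F, K s t w * ∑ r ∈ G, f r s t w =
      ∑ r ∈ G, ∑ s ∈ F, ∑ t ∈ F, ∑ w ∈ F, K s t w * f r s t w := by
  simp_rw [mul_sum, sum_comm (t := G)]

variable (F : Finset ι) (k a : ι → R) (b : ι → ι → R)

theorem sum_sum_sum_prod_kernel_mul₁ :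
    ∑ s ∈ F, ∑ t ∈ F, ∑ w ∈ F, k s * k t * k w * (a s * b t w) =
      (∑ s ∈ F, k s * a s) * ∑ t ∈ F, ∑ w ∈ F, k t * k w * b t w := by
  rw [sum_mul]
  refine sum_congr rfl fun s _ => ?_
  simp only [mul_sum]
  exact sum_congr rfl fun t _ => sum_congr rfl fun w _ => by ring

theorem sum_sum_sum_prod_kernel_mul₂ :
    ∑ s ∈ F, ∑ t ∈ F, ∑ w ∈ F, k s * k t * k w * (a t * b s w) =
      (∑ t ∈ F, k t * a t) * ∑ s ∈ F, ∑ w ∈ F, k s * k w * b s w := by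
  rw [sum_comm, ← sum_sum_sum_prod_kernel_mul₁]
  exact sum_congr rfl fun t _ => sum_congr rfl fun s _ => sum_congr rfl fun w _ => by ring

theorem sum_sum_sum_prod_kernel_mul₃ :
    ∑ s ∈ F, ∑ t ∈ F, ∑ w ∈ F, k s * k t * k w * (a w * b s t) =
      (∑ w ∈ F, k w * a w) * ∑ s ∈ F, ∑ t ∈ F, k s * k t * b s t := by
  rw [← sum_sum_sum_prod_kernel_mul₂]
  refine sum_congr rfl fun s _ => ?_
  rw [sum_comm]
  exact sum_congr rfl fun w _ => sum_congr rfl fun t _ => by ring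

end Finset

theorem stmt_11 (n : ℤ → ℝ) (hn : (Function.support n).Finite) (R : ℕ)
    (vX vY vZ : Fin R → ℤ → ℝ) (MYZ MXZ MXY : Fin R → ℤ × ℤ → ℝ) (x y z : ℤ) :
    (∑ s ∈ hn.toFinset, ∑ t ∈ hn.toFinset, ∑ w ∈ hn.toFinset,
        n s * n t * n w *
          (∑ r : Fin R,
            (vX r (x - s) * MYZ r (y - t, z - w) +
             vY r (y - t) * MXZ r (x - s, z - w) +
             vZ r (z - w) * MXY r (x - s, y - t)))) =
      ∑ r : Fin R,
        ((∑ s ∈ hn.toFinset, n s * vX r (x - s)) *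
            (∑ t ∈ hn.toFinset, ∑ w ∈ hn.toFinset, n t * n w * MYZ r (y - t, z - w)) +
         (∑ t ∈ hn.toFinset, n t * vY r (y - t)) *
            (∑ s ∈ hn.toFinset, ∑ w ∈ hn.toFinset, n s * n w * MXZ r (x - s, z - w)) +
         (∑ w ∈ hn.toFinset, n w * vZ r (z - w)) *
            (∑ s ∈ hn.toFinset, ∑ t ∈ hn.toFinset, n s * n t * MXY r (x - s, y - t))) := by
  rw [Finset.sum_sum_sum_mul_sum]
  refine Finset.sum_congr rfl fun r _ => ?_
  simp only [mul_add, Finset.sum_add_distrib]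
  rw [Finset.sum_sum_sum_prod_kernel_mul₁, Finset.sum_sum_sum_prod_kernel_mul₂,
    Finset.sum_sum_sum_prod_kernel_mul₃]
end

section
/- Let f : ℝ → ℝ be continuous with f(0) ≠ 0, and suppose there exists φ : ℝ → ℝ such that f(x)·f(y) = φ(x² + y²) for all x, y ∈ ℝ (i.e., the separable 2D kernel (x, y) ↦ f(x)·f(y) is circularly symmetric). Then there exist constants c ≠ 0 and a ∈ ℝ such that f(x) = c·exp(a·x²) for all x ∈ ℝ; that is, f is a Gaussian-type kernel. -/
open Real

theorem stmt_15 (f : ℝ → ℝ) (hf : Continuous f) (h0 : f 0 ≠ 0)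
    (φ : ℝ → ℝ) (hφ : ∀ x y : ℝ, f x * f y = φ (x ^ 2 + y ^ 2)) :
    ∃ c a : ℝ, c ≠ 0 ∧ ∀ x : ℝ, f x = c * Real.exp (a * x ^ 2) := by
  -- key functional equation
  have key : ∀ x y : ℝ, f x * f y = f (Real.sqrt (x ^ 2 + y ^ 2)) * f 0 := by
    intro x y
    have h1 := hφ x y
    have h2 := hφ (Real.sqrt (x ^ 2 + y ^ 2)) 0
    have hnn : (0:ℝ) ≤ x ^ 2 + y ^ 2 := by positivity
    rw [sq_sqrt hnn] at h2
    simp at h2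
    rw [h1, ← h2]
  -- f x = f |x|
  have feven : ∀ x : ℝ, f x = f |x| := by
    intro x
    have := key x 0
    rw [show x ^ 2 + 0 ^ 2 = x ^ 2 by ring, Real.sqrt_sq_eq_abs] at this
    exact mul_right_cancel₀ h0 this
  -- half-step
  have half : ∀ x : ℝ, 0 ≤ x → f (x / Real.sqrt 2) ^ 2 = f x * f 0 := by
    intro x hx
    have h2 : (0:ℝ) < Real.sqrt 2 := Real.sqrt_pos.2 (by norm_num)
    have := key (x / Real.sqrt 2) (x / Real.sqrt 2)
    have hsum : (x / Real.sqrt 2) ^ 2 + (x / Real.sqrt 2) ^ 2 = x ^ 2 := by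
      rw [div_pow, Real.sq_sqrt (by norm_num : (0:ℝ) ≤ 2)]
      ring
    rw [hsum, Real.sqrt_sq hx] at this
    rw [sq]; exact this
  -- f never vanishes
  have fne : ∀ x : ℝ, f x ≠ 0 := by
    intro x hx
    rw [feven x] at hx
    have hiter : ∀ n : ℕ, f (|x| / (Real.sqrt 2) ^ n) = 0 := by
      intro n
      induction n with
      | zero => simpa using hx
      | succ n ih =>
        have hnn : 0 ≤ |x| / (Real.sqrt 2) ^ n := by positivity
        have := half _ hnn
        rw [ih, zero_mul, pow_eq_zero_iff (by norm_num)] at this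
        rw [pow_succ, ← div_div]
        exact this
    have hlim : Filter.Tendsto (fun n : ℕ => |x| / (Real.sqrt 2) ^ n)
        Filter.atTop (nhds 0) := by
      have h1 : (1:ℝ) < Real.sqrt 2 := by
        rw [show (1:ℝ) = Real.sqrt 1 by simp]
        exact Real.sqrt_lt_sqrt (by norm_num) (by norm_num)
      simpa using (tendsto_pow_atTop_nhds_zero_of_lt_one
        (by positivity) (by rw [div_lt_one (by linarith)]; linarith)
        : Filter.Tendsto (fun n : ℕ => (1 / Real.sqrt 2) ^ n) Filter.atTop (nhds 0)).const_mul |x| |>.congr (by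
          intro n; rw [div_pow, one_pow, mul_one_div, div_eq_div_iff] <;> positivity)
    have h2 := ((hf.tendsto 0).comp hlim).congr hiter
    exact h0 (tendsto_nhds_unique tendsto_const_nhds h2).symm
  -- positivity of h
  set h : ℝ → ℝ := fun x => f x / f 0 with hh
  have hpos : ∀ x : ℝ, 0 < h x := by
    intro x
    have h1 := half |x| (abs_nonneg x)
    have h3 : 0 < f |x| * f 0 := by
      rw [← h1]
      exact lt_of_le_of_ne (sq_nonneg _) (Ne.symm (pow_ne_zero 2 (fne _)))
    show 0 < f x / f 0
    rcases lt_or_gt_of_ne (fne 0) with hneg | hposi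
    · have : f |x| < 0 := by
        by_contra hc
        push_neg at hc
        nlinarith
      rw [feven x]
      exact div_pos_of_neg_of_neg this hneg
    · have : 0 < f |x| := by
        by_contra hc
        push_neg at hc
        nlinarith
      rw [feven x]
      exact div_pos this hposi
  have hmul : ∀ x y : ℝ, h x * h y = h (Real.sqrt (x ^ 2 + y ^ 2)) := by
    intro x y
    have := key x y
    field_simp [hh]
    show f x / f 0 * (f y / f 0) = f (Real.sqrt (x ^ 2 + y ^ 2)) / f 0
    rw [div_mul_div_comm, this, mul_div_mul_right _ _ h0]
  -- L on nonneg
  set L : ℝ → ℝ := fun t => Real.log (h (Real.sqrt t)) with hL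
  have hL0 : L 0 = 0 := by
    show Real.log (h (Real.sqrt 0)) = 0
    rw [Real.sqrt_zero]
    show Real.log (f 0 / f 0) = 0
    rw [div_self h0, Real.log_one]
  have Ladd : ∀ s t : ℝ, 0 ≤ s → 0 ≤ t → L (s + t) = L s + L t := by
    intro s t hs ht
    have e := hmul (Real.sqrt s) (Real.sqrt t)
    rw [sq_sqrt hs, sq_sqrt ht] at e
    show Real.log (h (Real.sqrt (s + t))) =
      Real.log (h (Real.sqrt s)) + Real.log (h (Real.sqrt t))
    rw [← e, Real.log_mul (hpos _).ne' (hpos _).ne']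
  set ψ : ℝ → ℝ := fun t => L (max t 0) - L (max (-t) 0) with hψ
  have ψnn : ∀ t : ℝ, 0 ≤ t → ψ t = L t := by
    intro t ht
    rw [hψ]
    simp [max_eq_left ht, max_eq_right (neg_nonpos.2 ht), hL0]
  have ψneg : ∀ t : ℝ, ψ (-t) = -ψ t := by
    intro t; rw [hψ]; simp only [neg_neg]; ring
  have ψadd : ∀ s t : ℝ, ψ (s + t) = ψ s + ψ t := by
    have core : ∀ s t : ℝ, 0 ≤ s → 0 ≤ t → ψ (s + t) = ψ s + ψ t := by
      intro s t hs ht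
      rw [ψnn s hs, ψnn t ht, ψnn _ (by linarith), Ladd s t hs ht]
    have mixed : ∀ s t : ℝ, 0 ≤ s → t ≤ 0 → ψ (s + t) = ψ s + ψ t := by
      intro s t hs ht
      rcases le_total 0 (s + t) with hst | hst
      · have := core (s + t) (-t) hst (by linarith)
        simp at this
        rw [this, ψneg]; ring
      · have := core (-(s+t)) s (by linarith) hs
        have e : -(s+t) + s = -t := by ring
        rw [e] at this
        have h1 : ψ (-t) = -ψ t := ψneg t
        have h2 : ψ (-(s+t)) = -ψ (s+t) := ψneg (s+t)
        rw [h1, h2] at this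
        linarith
    intro s t
    rcases le_total 0 s with hs | hs
    · rcases le_total 0 t with ht | ht
      · exact core s t hs ht
      · exact mixed s t hs ht
    · rcases le_total 0 t with ht | ht
      · rw [add_comm, mixed t s ht hs]; ring
      · have := core (-s) (-t) (by linarith) (by linarith)
        have e : -s + -t = -(s+t) := by ring
        rw [e, ψneg, ψneg, ψneg] at this
        linarith
  -- continuity of ψ
  have hcont : Continuous ψ := by
    have hLc : Continuous L := by
      apply Continuous.log
      · exact ((hf.div_const (f 0)).comp Real.continuous_sqrt)
      · intro x; exact (hpos _).ne'
    exact ((hLc.comp (continuous_id.max continuous_const)).sub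
      (hLc.comp (continuous_neg.max continuous_const)))
  -- linearity
  have hlin : ∀ t : ℝ, ψ t = t * ψ 1 := by
    intro t
    have := map_real_smul (AddMonoidHom.mk' ψ (fun a b => ψadd a b)) hcont t 1
    simpa using this
  refine ⟨f 0, ψ 1, h0, fun x => ?_⟩
  have hx2 : (0:ℝ) ≤ x ^ 2 := sq_nonneg x
  have e1 : h x = Real.exp (ψ (x ^ 2)) := by
    rw [ψnn _ hx2]
    show h x = Real.exp (Real.log (h (Real.sqrt (x ^ 2))))
    rw [Real.exp_log (hpos _), Real.sqrt_sq_eq_abs]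
    show f x / f 0 = f |x| / f 0
    rw [← feven]
  have e2 : f x = f 0 * h x := by
    show f x = f 0 * (f x / f 0)
    field_simp
  rw [e2, e1, hlin (x ^ 2), mul_comm (x ^ 2)]
end
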